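/- Let X be a bounded convex subset of ℝ^N containing 0 in its interior, with B(0, r) ⊆ X ⊆ B(0, N) for some 0 < r ≤ N. Then the map h : ℝ^N → closure(X) which fixes each point of the closure of X and sends each point y outside X to the unique intersection point of the segment [0, y] with the boundary ∂X is uniformly continuous. -/

import Mathlib

/-!
On a convex body `s` with `0` in its interior, the point where the segment `[0, y]` leaves `s`
is `y / gauge s y`, so the map of the theorem is `y ↦ y / max 1 (gauge s y)`. The gauge is
`1/r`-Lipschitz when `ball 0 r ⊆ s`, and the retracted points lie in `closure s ⊆ closedBall 0 R`;
together these make the retraction `(1 + R/r)`-Lipschitz.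
-/

open Topology NNReal

theorem LipschitzWith.inv_smul_self {E : Type*} [NormedAddCommGroup E] [NormedSpace ℝ E]
    {m : E → ℝ} {K R : ℝ≥0} (hm : LipschitzWith K m) (hm_one : ∀ y, 1 ≤ m y)
    (hnorm : ∀ y, ‖(m y)⁻¹ • y‖ ≤ R) :
    LipschitzWith (1 + R * K) fun y => (m y)⁻¹ • y := by
  refine LipschitzWith.of_dist_le_mul fun x y => ?_
  have hx : 0 < m x := one_pos.trans_le (hm_one x)
  have hy : 0 < m y := one_pos.trans_le (hm_one y)
  -- Comparing against the bounded vector `(m y)⁻¹ • y` rather than `y` lets `hnorm` absorb `‖y‖`.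
  have hsplit : (m x)⁻¹ • x - (m y)⁻¹ • y
      = (m x)⁻¹ • (x - y) + ((m y - m x) / m x) • ((m y)⁻¹ • y) := by
    rw [smul_smul]
    have : (m y - m x) / m x * (m y)⁻¹ = (m x)⁻¹ - (m y)⁻¹ := by field_simp
    rw [this]
    module
  have hinv : (m x)⁻¹ ≤ 1 := inv_le_one_of_one_le₀ (hm_one x)
  have hdiff : |m y - m x| ≤ K * ‖x - y‖ := by
    rw [← Real.dist_eq, dist_comm, ← dist_eq_norm]
    exact hm.dist_le_mul x y
  rw [dist_eq_norm, dist_eq_norm, hsplit, NNReal.coe_add, NNReal.coe_mul, NNReal.coe_one]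
  calc ‖(m x)⁻¹ • (x - y) + ((m y - m x) / m x) • ((m y)⁻¹ • y)‖
      ≤ (m x)⁻¹ * ‖x - y‖ + |m y - m x| * (m x)⁻¹ * ‖(m y)⁻¹ • y‖ := by
        refine (norm_add_le _ _).trans (le_of_eq ?_)
        rw [norm_smul, norm_smul, Real.norm_eq_abs, Real.norm_eq_abs, abs_inv, abs_of_pos hx,
          abs_div, abs_of_pos hx, div_eq_mul_inv]
    _ ≤ 1 * ‖x - y‖ + (K * ‖x - y‖) * 1 * R := by
        gcongr
        exact hnorm y
    _ = (1 + R * K) * ‖x - y‖ := by ring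

section Gauge

variable {E : Type*} [NormedAddCommGroup E] [NormedSpace ℝ E] {s : Set E}

noncomputable def gaugeRetraction (s : Set E) (y : E) : E := (max 1 (gauge s y))⁻¹ • y

theorem gaugeRetraction_of_mem {y : E} (hy : y ∈ s) : gaugeRetraction s y = y := by
  rw [gaugeRetraction, max_eq_left (gauge_le_one_of_mem hy), inv_one, one_smul]

theorem gaugeRetraction_mem_closure (hs : Convex ℝ s) (hs₀ : s ∈ 𝓝 0) (y : E) :
    gaugeRetraction s y ∈ closure s := by
  have hpos : 0 < max 1 (gauge s y) := one_pos.trans_le (le_max_left _ _)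
  rw [← gauge_le_one_iff_mem_closure hs hs₀, gaugeRetraction,
    gauge_smul_of_nonneg (inv_nonneg.2 hpos.le), smul_eq_mul, inv_mul_le_iff₀ hpos, mul_one]
  exact le_max_right _ _

theorem eq_gaugeRetraction_of_mem_segment_of_mem_frontier (hs : Convex ℝ s) (hs₀ : s ∈ 𝓝 0)
    {y z : E} (hzy : z ∈ segment ℝ 0 y) (hz : z ∈ frontier s) : z = gaugeRetraction s y := by
  obtain ⟨a, t, ha, ht, hat, rfl⟩ := hzy
  rw [smul_zero, zero_add] at hz ⊢
  have hgauge : t * gauge s y = 1 := by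
    rw [← smul_eq_mul, ← gauge_smul_of_nonneg ht, gauge_eq_one_iff_mem_frontier hs hs₀]
    exact hz
  have ht₀ : 0 < t := ht.lt_of_ne' (left_ne_zero_of_mul_eq_one hgauge)
  have ht₁ : t ≤ 1 := by linarith
  have hgauge_eq : gauge s y = t⁻¹ := eq_inv_of_mul_eq_one_right hgauge
  have hgauge_ge : 1 ≤ gauge s y := hgauge_eq ▸ (one_le_inv₀ ht₀).2 ht₁
  rw [gaugeRetraction, max_eq_right hgauge_ge, hgauge_eq, inv_inv]

theorem lipschitzWith_gaugeRetraction (hs : Convex ℝ s) {r R : ℝ≥0} (hr : 0 < r)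
    (hball : Metric.ball 0 r ⊆ s) (hbdd : s ⊆ Metric.closedBall 0 R) :
    LipschitzWith (1 + R * r⁻¹) (gaugeRetraction s) := by
  have hs₀ : s ∈ 𝓝 0 := Filter.mem_of_superset (Metric.ball_mem_nhds 0 hr) hball
  refine ((hs.lipschitzWith_gauge hr hball).const_max 1).inv_smul_self (fun _ => le_max_left _ _)
    fun y => mem_closedBall_zero_iff.1 ?_
  exact closure_minimal hbdd Metric.isClosed_closedBall (gaugeRetraction_mem_closure hs hs₀ y)

end Gauge

theorem boundary_crossing_uniformly_continuous_general {N : ℕ}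
    (X : Set (EuclideanSpace ℝ (Fin N))) (hX : Convex ℝ X)
    (r R : ℝ) (hr : 0 < r)
    (hball : Metric.ball (0 : EuclideanSpace ℝ (Fin N)) r ⊆ X)
    (hbdd : X ⊆ Metric.ball (0 : EuclideanSpace ℝ (Fin N)) R)
    (h : EuclideanSpace ℝ (Fin N) → EuclideanSpace ℝ (Fin N))
    (hfix : ∀ x ∈ closure X, h x = x)
    (hout : ∀ y ∉ X, h y ∈ segment ℝ 0 y ∩ frontier X) :
    UniformContinuous h := by
  have hX₀ : X ∈ 𝓝 0 := Filter.mem_of_superset (Metric.ball_mem_nhds 0 hr) hball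
  have h_eq : h = gaugeRetraction X := funext fun y => by
    by_cases hy : y ∈ X
    · rw [hfix y (subset_closure hy), gaugeRetraction_of_mem hy]
    · exact eq_gaugeRetraction_of_mem_segment_of_mem_frontier hX hX₀ (hout y hy).1 (hout y hy).2
  have hball' : Metric.ball 0 (r.toNNReal : ℝ) ⊆ X := by rwa [Real.coe_toNNReal r hr.le]
  have hbdd' : X ⊆ Metric.closedBall 0 (R.toNNReal : ℝ) :=
    hbdd.trans <| Metric.ball_subset_closedBall.trans <|
      Metric.closedBall_subset_closedBall (Real.le_coe_toNNReal R)
  rw [h_eq]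
  exact (lipschitzWith_gaugeRetraction hX (Real.toNNReal_pos.2 hr) hball' hbdd').uniformContinuous

theorem boundary_crossing_uniformly_continuous {N : ℕ}
    (X : Set (EuclideanSpace ℝ (Fin N))) (hX : Convex ℝ X)
    (r R : ℝ) (hr : 0 < r) (hrR : r ≤ R)
    (hball : Metric.ball (0 : EuclideanSpace ℝ (Fin N)) r ⊆ X)
    (hbdd : X ⊆ Metric.ball (0 : EuclideanSpace ℝ (Fin N)) R)
    (h : EuclideanSpace ℝ (Fin N) → EuclideanSpace ℝ (Fin N))
    (hrange : ∀ z, h z ∈ closure X)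
    (hfix : ∀ x ∈ closure X, h x = x)
    (hout : ∀ y ∉ X, h y ∈ segment ℝ 0 y ∩ frontier X) :
    UniformContinuous h :=
  boundary_crossing_uniformly_continuous_general X hX r R hr hball hbdd h hfix hout
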